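/- Let S be a normal idempotent ordered semigroup (for all a,b,c ∈ S there is x with abca ≤ acxba). Then the relation L (a L b iff a ≤ xb and b ≤ ya for some x,y ∈ S) is a left congruence: if a L b then ca L cb for all c ∈ S. -/
import Mathlib

private lemma greenL_aux
    {S : Type*} [Semigroup S] [PartialOrder S]
    [CovariantClass S S (· * ·) (· ≤ ·)]
    [CovariantClass S S (Function.swap (· * ·)) (· ≤ ·)]
    (hidem : ∀ a : S, a ≤ a * a)
    (hnormal : ∀ a b c : S, ∃ x : S, a * b * c * a ≤ a * c * x * b * a)
    (a b c x : S) (hx : a ≤ x * b) :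
    ∃ u : S, c * a ≤ u * (c * b) := by
  obtain ⟨t, ht⟩ := hnormal b c x
  refine ⟨c * x * b * x * t, ?_⟩
  calc c * a ≤ c * (x * b) := mul_le_mul_right hx c
    _ ≤ (c * (x * b)) * (c * (x * b)) := hidem _
    _ = c * x * (b * c * x * b) := by simp only [mul_assoc]
    _ ≤ c * x * (b * x * t * c * b) := mul_le_mul_right ht _
    _ = c * x * b * x * t * (c * b) := by simp only [mul_assoc]

/-- In a normal idempotent ordered semigroup, the `L` relation
(`a L b` iff `a ≤ xb` and `b ≤ ya` for some `x, y ∈ S`) is a left congruence. -/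
theorem greenL_left_congruence_of_normal
    {S : Type*} [Semigroup S] [PartialOrder S]
    [CovariantClass S S (· * ·) (· ≤ ·)]
    [CovariantClass S S (Function.swap (· * ·)) (· ≤ ·)]
    (hidem : ∀ a : S, a ≤ a * a)
    (hnormal : ∀ a b c : S, ∃ x : S, a * b * c * a ≤ a * c * x * b * a)
    (a b c : S)
    (hab : (∃ x : S, a ≤ x * b) ∧ ∃ y : S, b ≤ y * a) :
    (∃ x : S, c * a ≤ x * (c * b)) ∧ ∃ y : S, c * b ≤ y * (c * a) := by
  obtain ⟨⟨x, hx⟩, ⟨y, hy⟩⟩ := hab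
  exact ⟨greenL_aux hidem hnormal a b c x hx, greenL_aux hidem hnormal b a c y hy⟩
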